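/- arXiv:1004.3342 — 4 statements merged into one kernel-verified Lean document; each statement's English description precedes it below -/
import Mathlib

section
/- Each of the relations E¹ and E³ is a convex equivalence relation on the set of nonstandard elements of M. -/
/-- `a` is a nonstandard element: above every natural number cast. -/
def Nonstd {M : Type*} [CommSemiring M] [LinearOrder M] [IsStrictOrderedRing M] (a : M) : Prop :=
  ∀ n : ℕ, (n : M) < a

def E0 {M : Type*} [CommSemiring M] [LinearOrder M] [IsStrictOrderedRing M] (a b : M) : Prop :=
  ∃ n : ℕ, a < b + (n : M) ∧ b < a + (n : M)

def E1 {M : Type*} [CommSemiring M] [LinearOrder M] [IsStrictOrderedRing M] (a b : M) : Prop :=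
  ∃ c : M, (∀ n : ℕ, (n : M) * c < a ∧ (n : M) * c < b) ∧ a < b + c ∧ b < a + c

def E2 {M : Type*} [CommSemiring M] [LinearOrder M] [IsStrictOrderedRing M] (a b : M) : Prop :=
  ∃ n : ℕ, a < (n : M) * b ∧ b < (n : M) * a

def E3 {M : Type*} [CommSemiring M] [LinearOrder M] [IsStrictOrderedRing M] (a b : M) : Prop :=
  ∃ c : M, (∀ n : ℕ, c ^ n < a ∧ c ^ n < b) ∧ a < b * c ∧ b < a * c

def E4 {M : Type*} [CommSemiring M] [LinearOrder M] [IsStrictOrderedRing M] (a b : M) : Prop :=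
  ∃ n : ℕ, a < b ^ n ∧ b < a ^ n

/-- `a E⁵ b`: some order automorphism of `M` maps `a` to `b`. -/
def E5 {M : Type*} [CommSemiring M] [LinearOrder M] [IsStrictOrderedRing M] (a b : M) : Prop :=
  ∃ f : M ≃o M, f a = b

/-- `E` is a convex equivalence relation on the nonstandard elements of `M`. -/
def IsConvexEquiv {M : Type*} [CommSemiring M] [LinearOrder M] [IsStrictOrderedRing M] (E : M → M → Prop) : Prop :=
  (∀ a : M, Nonstd a → E a a) ∧
  (∀ a b : M, Nonstd a → Nonstd b → E a b → E b a) ∧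
  (∀ a b c : M, Nonstd a → Nonstd b → Nonstd c → E a b → E b c → E a c) ∧
  (∀ a b c : M, Nonstd a → Nonstd b → Nonstd c → a ≤ b → b ≤ c → E a c → E a b)

/-- An almost `{<,+}`-isomorphism: an order isomorphism whose additivity error is finite. -/
def IsAlmostAddIso {M₁ M₂ : Type*} [CommSemiring M₁] [LinearOrder M₁] [IsStrictOrderedRing M₁]
    [CommSemiring M₂] [LinearOrder M₂] [IsStrictOrderedRing M₂] (f : M₁ ≃o M₂) : Prop :=
  ∀ a b : M₁, ∃ n : ℕ, f (a + b) < f a + f b + (n : M₂) ∧ f a + f b < f (a + b) + (n : M₂)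

/-- `M` is 2-order-rigid. -/
def OrderRigid2 (M : Type*) [CommSemiring M] [LinearOrder M] [IsStrictOrderedRing M] : Prop :=
  ∀ a b : M, Nonstd a → Nonstd b →
    Nonempty ({x : M // x < a} ≃o {x : M // x < b}) → E2 a b

/-- `M` is 3-order-rigid. -/
def OrderRigid3 (M : Type*) [CommSemiring M] [LinearOrder M] [IsStrictOrderedRing M] : Prop :=
  ∀ a b : M, Nonstd a → Nonstd b →
    Nonempty ({x : M // x < a} ≃o {x : M // x < b}) → E3 a b

/-- `M` is 4-order-rigid. -/
def OrderRigid4 (M : Type*) [CommSemiring M] [LinearOrder M] [IsStrictOrderedRing M] : Prop :=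
  ∀ a b : M, Nonstd a → Nonstd b →
    Nonempty ({x : M // x < a} ≃o {x : M // x < b}) → E4 a b

/-!
Both relations are instances of one relation on a linearly ordered commutative monoid:
`a ~ b` iff `a < b * c` and `b < a * c` for some `c` all of whose powers lie below `a` and `b`.
`E¹` is its additive form on `M` itself, and `E³` is its multiplicative form on the positive
cone of `M`, which is a linearly ordered cancellative monoid. Transitivity uses the witness
`c₁ * c₂`: its powers are bounded by even powers of `d = max c₁ c₂`, and those lie below `a`
because `d ^ (n + 1) < b < a * d` cancels to `d ^ n < a`.
-/

section OrderedMonoid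

variable {α : Type*} [CommMonoid α] [LinearOrder α]

@[to_additive]
def MulClose (a b : α) : Prop :=
  ∃ c : α, (∀ n : ℕ, c ^ n < a ∧ c ^ n < b) ∧ a < b * c ∧ b < a * c

@[to_additive]
theorem MulClose.symm {a b : α} : MulClose a b → MulClose b a
  | ⟨c, hpow, hab, hba⟩ => ⟨c, fun n => (hpow n).symm, hba, hab⟩

@[to_additive]
theorem mulClose_self_of_forall_pow_lt [MulLeftStrictMono α] {a c : α}
    (hpow : ∀ n : ℕ, c ^ n < a) (hc : 1 < c) : MulClose a a :=
  ⟨c, fun n => ⟨hpow n, hpow n⟩, lt_mul_of_one_lt_right' a hc, lt_mul_of_one_lt_right' a hc⟩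

variable [IsOrderedMonoid α]

@[to_additive]
theorem pow_lt_of_forall_pow_lt_of_lt_mul {a b c : α} (hpow : ∀ n : ℕ, c ^ n < b)
    (hb : b < a * c) (n : ℕ) : c ^ n < a :=
  lt_of_mul_lt_mul_right' <| calc
    c ^ n * c = c ^ (n + 1) := (pow_succ c n).symm
    _ < b := hpow (n + 1)
    _ < a * c := hb

@[to_additive]
theorem one_lt_of_lt_mul_of_lt_mul {a b c : α} (hab : a < b * c) (hba : b < a * c) : 1 < c := by
  by_contra! hc
  exact (hab.trans_le (mul_le_of_le_one_right' hc)).not_gt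
    (hba.trans_le (mul_le_of_le_one_right' hc))

@[to_additive]
theorem MulClose.trans {a b c : α} : MulClose a b → MulClose b c → MulClose a c
  | ⟨c₁, hpow₁, hab, hba⟩, ⟨c₂, hpow₂, hbc, hcb⟩ => by
    have hd : ∀ n : ℕ, max c₁ c₂ ^ n < b := by
      rcases max_choice c₁ c₂ with h | h <;> rw [h]
      exacts [fun n => (hpow₁ n).2, fun n => (hpow₂ n).1]
    have hda := pow_lt_of_forall_pow_lt_of_lt_mul hd
      (hba.trans_le (mul_le_mul_right (le_max_left _ _) a))
    have hdc := pow_lt_of_forall_pow_lt_of_lt_mul hd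
      (hbc.trans_le (mul_le_mul_right (le_max_right _ _) c))
    have hle (n : ℕ) : (c₁ * c₂) ^ n ≤ max c₁ c₂ ^ (2 * n) := by
      rw [pow_mul, sq]
      exact pow_le_pow_left' (mul_le_mul' (le_max_left _ _) (le_max_right _ _)) n
    refine ⟨c₁ * c₂, fun n => ⟨(hle n).trans_lt (hda _), (hle n).trans_lt (hdc _)⟩,
      ?_, ?_⟩
    · calc a < b * c₁ := hab
        _ ≤ c * c₂ * c₁ := mul_le_mul_left hbc.le c₁
        _ = c * (c₁ * c₂) := by rw [mul_assoc, mul_comm c₂]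
    · calc c < b * c₂ := hcb
        _ ≤ a * c₁ * c₂ := mul_le_mul_left hba.le c₂
        _ = a * (c₁ * c₂) := mul_assoc a c₁ c₂

@[to_additive]
theorem MulClose.of_le_of_le [MulLeftStrictMono α] {a b c : α} (h : MulClose a c)
    (hab : a ≤ b) (hbc : b ≤ c) : MulClose a b :=
  let ⟨e, hpow, hac, hca⟩ := h
  ⟨e, fun n => ⟨(hpow n).1, (hpow n).1.trans_le hab⟩,
    hab.trans_lt (lt_mul_of_one_lt_right' b (one_lt_of_lt_mul_of_lt_mul hac hca)),
    hbc.trans_lt hca⟩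

end OrderedMonoid

section OrderedSemiring

variable {M : Type*} [CommSemiring M] [LinearOrder M] [IsStrictOrderedRing M]

theorem Nonstd.pos {a : M} (ha : Nonstd a) : 0 < a := by
  simpa using ha 0

theorem e1_iff_addClose (a b : M) : E1 a b ↔ AddClose a b := by
  simp only [E1, AddClose, nsmul_eq_mul]

theorem e3_iff_mulClose {a b : M} (ha : 0 < a) (hb : 0 < b) :
    E3 a b ↔ MulClose (⟨a, ha⟩ : {x : M // 0 < x}) ⟨b, hb⟩ := by
  constructor
  · rintro ⟨c, hpow, hab, hba⟩
    have hc : 0 < c := pos_of_mul_pos_right (ha.trans hab) hb.le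
    exact ⟨⟨c, hc⟩, hpow, hab, hba⟩
  · rintro ⟨⟨c, hc⟩, hpow, hab, hba⟩
    exact ⟨c, hpow, hab, hba⟩

theorem isConvexEquiv_E1 : IsConvexEquiv (E1 (M := M)) := by
  simp only [IsConvexEquiv, e1_iff_addClose]
  refine ⟨fun a ha =>
      addClose_self_of_forall_nsmul_lt (c := 1) (by simpa [Nonstd] using ha) one_pos,
    fun _ _ _ _ => AddClose.symm, fun _ _ _ _ _ _ => AddClose.trans,
    fun _ _ _ _ _ _ hab hbc h => h.of_le_of_le hab hbc⟩

theorem isConvexEquiv_E3 : IsConvexEquiv (E3 (M := M)) := by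
  refine ⟨fun a ha => ?_, fun a b ha hb h => ?_, fun a b c ha hb hc hab hbc => ?_,
    fun a b c ha hb hc hab hbc h => ?_⟩
  · rw [e3_iff_mulClose ha.pos ha.pos]
    refine mulClose_self_of_forall_pow_lt (c := ⟨2, two_pos⟩) (fun n => ?_) one_lt_two
    rw [← Subtype.coe_lt_coe, Positive.val_pow]
    simpa using ha (2 ^ n)
  · rw [e3_iff_mulClose ha.pos hb.pos] at h
    exact (e3_iff_mulClose hb.pos ha.pos).2 h.symm
  · rw [e3_iff_mulClose ha.pos hb.pos] at hab
    rw [e3_iff_mulClose hb.pos hc.pos] at hbc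
    exact (e3_iff_mulClose ha.pos hc.pos).2 (hab.trans hbc)
  · rw [e3_iff_mulClose ha.pos hc.pos] at h
    exact (e3_iff_mulClose ha.pos hb.pos).2 (h.of_le_of_le hab hbc)

end OrderedSemiring

theorem E1_E3_convexEquiv_general {M : Type*} [CommSemiring M] [LinearOrder M] [IsStrictOrderedRing M] :
    IsConvexEquiv (E1 (M := M)) ∧ IsConvexEquiv (E3 (M := M)) :=
  ⟨isConvexEquiv_E1, isConvexEquiv_E3⟩

/-- E¹ and E³ are convex equivalence relations on the nonstandard elements. -/
theorem E1_E3_convexEquiv {M : Type*} [CommSemiring M] [LinearOrder M] [IsStrictOrderedRing M]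
    (h0 : ∀ x : M, 0 ≤ x) :
    IsConvexEquiv (E1 (M := M)) ∧ IsConvexEquiv (E3 (M := M)) :=
  E1_E3_convexEquiv_general
end

section
/- Let f : M₁ ≃o M₂ be an almost {<,+}-isomorphism. Then for all nonstandard a, b ∈ M₁: a E¹ b in M₁ iff f a E¹ f b in M₂, and a E² b in M₁ iff f a E² f b in M₂. -/
/-!
Because `0` is least and both orders are discrete, an order isomorphism fixes every natural number
and commutes with adding `1`; hence it preserves nonstandardness and finite distance (`E0`), and the
inverse of an almost additive isomorphism is again almost additive. Almost additivity gives
`f (n * c) ≈ n * f c` up to a finite error, which any nonstandard element absorbs. This transports a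
witness `n` of `E²` to `n + 1`, and a witness `c` of `E¹` to `f c + f c` when `c` is nonstandard and
to a large natural number otherwise. The converses follow by applying this to `f.symm`.
-/

def DiscretelyOrdered (M : Type*) [CommSemiring M] [LinearOrder M] [IsStrictOrderedRing M] : Prop :=
  ∀ a x : M, ¬(a < x ∧ x < a + 1)

theorem OrderIso.map_zero_of_forall_nonneg {α β : Type*} [PartialOrder α] [PartialOrder β]
    [Zero α] [Zero β] (f : α ≃o β) (h0α : ∀ x : α, 0 ≤ x) (h0β : ∀ x : β, 0 ≤ x) : f 0 = 0 :=
  le_antisymm (f.le_symm_apply.1 (h0α _)) (h0β _)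

section

variable {M M₁ M₂ : Type*} [CommSemiring M] [LinearOrder M] [IsStrictOrderedRing M]
  [CommSemiring M₁] [LinearOrder M₁] [IsStrictOrderedRing M₁]
  [CommSemiring M₂] [LinearOrder M₂] [IsStrictOrderedRing M₂]

theorem DiscretelyOrdered.add_one_le_of_lt (hd : DiscretelyOrdered M) {x y : M} (h : x < y) :
    x + 1 ≤ y :=
  le_of_not_gt fun hy => hd x y ⟨h, hy⟩

namespace E0

theorem refl (a : M) : E0 a a :=
  ⟨1, by simp, by simp⟩

theorem symm {a b : M} : E0 a b → E0 b a
  | ⟨n, hab, hba⟩ => ⟨n, hba, hab⟩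

theorem trans {a b c : M} : E0 a b → E0 b c → E0 a c
  | ⟨m, hab, hba⟩, ⟨n, hbc, hcb⟩ => by
    refine ⟨m + n, ?_, ?_⟩
    · calc a < b + m := hab
        _ < c + n + m := by gcongr
        _ = c + (m + n : ℕ) := by push_cast; ring
    · calc c < b + n := hcb
        _ < a + m + n := by gcongr
        _ = a + (m + n : ℕ) := by push_cast; ring

theorem add_right {a b : M} (h : E0 a b) (c : M) : E0 (a + c) (b + c) := by
  obtain ⟨n, hab, hba⟩ := h
  exact ⟨n, by rw [add_right_comm]; gcongr, by rw [add_right_comm]; gcongr⟩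

theorem lt_add_of_nonstd {a b c : M} (h : E0 a b) (hc : Nonstd c) : a < b + c :=
  let ⟨n, hab, _⟩ := h
  hab.trans (add_lt_add_right (hc n) b)

end E0

namespace OrderIso

variable (f : M₁ ≃o M₂)

theorem map_add_one (hd₁ : DiscretelyOrdered M₁) (hd₂ : DiscretelyOrdered M₂) (x : M₁) :
    f (x + 1) = f x + 1 := by
  refine le_antisymm ?_ (hd₂.add_one_le_of_lt (f.lt_iff_lt.2 (lt_add_one x)))
  rw [← f.le_symm_apply]
  exact hd₁.add_one_le_of_lt (f.lt_symm_apply.2 (lt_add_one _))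

theorem map_add_natCast (hd₁ : DiscretelyOrdered M₁) (hd₂ : DiscretelyOrdered M₂) (x : M₁) (n : ℕ) :
    f (x + n) = f x + n := by
  induction n with
  | zero => simp
  | succ n ih =>
    rw [Nat.cast_succ, ← add_assoc, f.map_add_one hd₁ hd₂, ih, add_assoc, Nat.cast_succ]

theorem map_natCast (h0₁ : ∀ x : M₁, 0 ≤ x) (h0₂ : ∀ x : M₂, 0 ≤ x)
    (hd₁ : DiscretelyOrdered M₁) (hd₂ : DiscretelyOrdered M₂) (n : ℕ) : f n = n := by
  simpa [f.map_zero_of_forall_nonneg h0₁ h0₂] using f.map_add_natCast hd₁ hd₂ 0 n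

end OrderIso

theorem Nonstd.map (h0₁ : ∀ x : M₁, 0 ≤ x) (h0₂ : ∀ x : M₂, 0 ≤ x) (hd₁ : DiscretelyOrdered M₁)
    (hd₂ : DiscretelyOrdered M₂) (f : M₁ ≃o M₂) {a : M₁} (ha : Nonstd a) : Nonstd (f a) :=
  fun n => by simpa [f.map_natCast h0₁ h0₂ hd₁ hd₂] using f.lt_iff_lt.2 (ha n)

theorem E0.map (hd₁ : DiscretelyOrdered M₁) (hd₂ : DiscretelyOrdered M₂) (f : M₁ ≃o M₂)
    {a b : M₁} (h : E0 a b) : E0 (f a) (f b) := by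
  obtain ⟨n, hab, hba⟩ := h
  refine ⟨n, ?_, ?_⟩ <;> rw [← f.map_add_natCast hd₁ hd₂] <;> exact f.strictMono ‹_›

namespace IsAlmostAddIso

variable {f : M₁ ≃o M₂}

theorem e0_map_add (hf : IsAlmostAddIso f) (a b : M₁) : E0 (f (a + b)) (f a + f b) :=
  hf a b

theorem symm (hf : IsAlmostAddIso f) (hd₁ : DiscretelyOrdered M₁) (hd₂ : DiscretelyOrdered M₂) :
    IsAlmostAddIso f.symm := fun x y => show E0 _ _ by
  simpa using ((hf.e0_map_add (f.symm x) (f.symm y)).map hd₂ hd₁ f.symm).symm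

theorem map_natCast_mul (hf : IsAlmostAddIso f) (h0₁ : ∀ x : M₁, 0 ≤ x) (h0₂ : ∀ x : M₂, 0 ≤ x)
    (c : M₁) (n : ℕ) :
    E0 (f (n * c)) (n * f c) := by
  induction n with
  | zero => simpa [f.map_zero_of_forall_nonneg h0₁ h0₂] using E0.refl (0 : M₂)
  | succ n ih =>
    simpa only [Nat.cast_succ, add_one_mul] using
      (hf.e0_map_add (n * c) c).trans (ih.add_right (f c))

theorem map_lt_add (hf : IsAlmostAddIso f) {a b c : M₁} (h : a < b + c) :
    ∃ k : ℕ, f a < f b + f c + k :=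
  let ⟨k, hk, _⟩ := hf b c
  ⟨k, (f.lt_iff_lt.2 h).trans hk⟩

theorem map_lt_natCast_mul (hf : IsAlmostAddIso f) (h0₁ : ∀ x : M₁, 0 ≤ x) (h0₂ : ∀ x : M₂, 0 ≤ x)
    {a b : M₁} {n : ℕ} (hfb : Nonstd (f b)) (h : a < n * b) : f a < (n + 1 : ℕ) * f b :=
  calc f a < f (n * b) := f.lt_iff_lt.2 h
    _ < n * f b + f b := (hf.map_natCast_mul h0₁ h0₂ b n).lt_add_of_nonstd hfb
    _ = (n + 1 : ℕ) * f b := by push_cast; ring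

theorem natCast_mul_map_lt (hf : IsAlmostAddIso f) (h0₁ : ∀ x : M₁, 0 ≤ x) (h0₂ : ∀ x : M₂, 0 ≤ x)
    {a c : M₁} (hfc : Nonstd (f c)) (h : ∀ n : ℕ, n * c < a) (n : ℕ) : n * f c < f a := by
  have : n * f c + f c < f ((n + 1 : ℕ) * c) + f c := by
    simpa [add_one_mul] using (hf.map_natCast_mul h0₁ h0₂ c (n + 1)).symm.lt_add_of_nonstd hfc
  exact (lt_of_add_lt_add_right this).trans (f.lt_iff_lt.2 (h (n + 1)))

theorem e2_map (hf : IsAlmostAddIso f) (h0₁ : ∀ x : M₁, 0 ≤ x) (h0₂ : ∀ x : M₂, 0 ≤ x)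
    {a b : M₁} (hfa : Nonstd (f a)) (hfb : Nonstd (f b)) : E2 a b → E2 (f a) (f b)
  | ⟨n, hab, hba⟩ =>
    ⟨n + 1, hf.map_lt_natCast_mul h0₁ h0₂ hfb hab, hf.map_lt_natCast_mul h0₁ h0₂ hfa hba⟩

theorem e1_map (hf : IsAlmostAddIso f) (h0₁ : ∀ x : M₁, 0 ≤ x) (h0₂ : ∀ x : M₂, 0 ≤ x)
    (hd₁ : DiscretelyOrdered M₁) (hd₂ : DiscretelyOrdered M₂) {a b : M₁} (hfa : Nonstd (f a))
    (hfb : Nonstd (f b)) : E1 a b → E1 (f a) (f b) := by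
  rintro ⟨c, hc, hab, hba⟩
  obtain ⟨k₁, hk₁⟩ := hf.map_lt_add hab
  obtain ⟨k₂, hk₂⟩ := hf.map_lt_add hba
  suffices ∃ d, (∀ n : ℕ, n * d < f a ∧ n * d < f b) ∧ f c + (k₁ + k₂ : ℕ) ≤ d by
    obtain ⟨d, hd, hcd⟩ := this
    refine ⟨d, hd, hk₁.trans_le ?_, hk₂.trans_le ?_⟩
    · calc f b + f c + k₁ ≤ f b + (f c + (k₁ + k₂ : ℕ)) := by rw [add_assoc]; gcongr; omega
        _ ≤ f b + d := by gcongr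
    · calc f a + f c + k₂ ≤ f a + (f c + (k₁ + k₂ : ℕ)) := by rw [add_assoc]; gcongr; omega
        _ ≤ f a + d := by gcongr
  by_cases hcs : Nonstd c
  · have hfc := hcs.map h0₁ h0₂ hd₁ hd₂ f
    refine ⟨f c + f c, fun n => ?_, by gcongr; exact (hfc _).le⟩
    rw [show (n : M₂) * (f c + f c) = (2 * n : ℕ) * f c by push_cast; ring]
    exact ⟨hf.natCast_mul_map_lt h0₁ h0₂ hfc (fun m => (hc m).1) _,
      hf.natCast_mul_map_lt h0₁ h0₂ hfc (fun m => (hc m).2) _⟩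
  · obtain ⟨m, hm⟩ : ∃ m : ℕ, c ≤ m := by simpa [Nonstd] using hcs
    have hfc : f c ≤ m := f.map_natCast h0₁ h0₂ hd₁ hd₂ m ▸ f.monotone hm
    refine ⟨(m + (k₁ + k₂) : ℕ), fun n => ?_, by push_cast; gcongr⟩
    rw [← Nat.cast_mul]
    exact ⟨hfa _, hfb _⟩

end IsAlmostAddIso

end

/-- an almost `{<,+}`-isomorphism maps `E¹` onto `E¹` and `E²` onto `E²`. -/
theorem almostAddIso_maps_E1_E2 {M₁ M₂ : Type*}
    [CommSemiring M₁] [LinearOrder M₁] [IsStrictOrderedRing M₁] [CommSemiring M₂] [LinearOrder M₂] [IsStrictOrderedRing M₂]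
    (h0₁ : ∀ x : M₁, 0 ≤ x) (h0₂ : ∀ x : M₂, 0 ≤ x)
    (hd₁ : ∀ a x : M₁, ¬(a < x ∧ x < a + 1)) (hd₂ : ∀ a x : M₂, ¬(a < x ∧ x < a + 1))
    (f : M₁ ≃o M₂) (hf : IsAlmostAddIso f)
    (a b : M₁) (ha : Nonstd a) (hb : Nonstd b) :
    (E1 a b ↔ E1 (f a) (f b)) ∧ (E2 a b ↔ E2 (f a) (f b)) := by
  have hf' := hf.symm hd₁ hd₂
  have hfa := ha.map h0₁ h0₂ hd₁ hd₂ f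
  have hfb := hb.map h0₁ h0₂ hd₁ hd₂ f
  refine ⟨⟨hf.e1_map h0₁ h0₂ hd₁ hd₂ hfa hfb, fun h => ?_⟩,
    ⟨hf.e2_map h0₁ h0₂ hfa hfb, fun h => ?_⟩⟩
  · simpa using hf'.e1_map h0₂ h0₁ hd₂ hd₁ (by simpa using ha) (by simpa using hb) h
  · simpa using hf'.e2_map h0₂ h0₁ (by simpa using ha) (by simpa using hb) h
end

section
/- If there are order automorphisms f₁, f₂ : M ≃o M with f₁ a₁ = b₁ and f₂ a₂ = b₂, then there is an order automorphism f : M ≃o M with f (a₁ + a₂) = b₁ + b₂ (that is, a₁ E⁵ b₁ and a₂ E⁵ b₂ imply (a₁ + a₂) E⁵ (b₁ + b₂)). -/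
/-! Glue `f₁`, restricted to `Iio a₁ ≃o Iio b₁`, to the translate `x ↦ b₁ + f₂ (x - a₁)` of `f₂`.
The translate maps `Ici a₁` onto `Ici b₁` because, when `0` is least and differences exist,
`x ↦ a + x` is an order isomorphism of `M` onto `Ici a`. The glued automorphism sends `a₁ + a₂`
to `b₁ + f₂ a₂ = b₁ + b₂`. -/

open Set

namespace OrderIso

variable {α β : Type*}

protected def Iio [Preorder α] [Preorder β] (e : α ≃o β) (x : α) : Iio x ≃o Iio (e x) where
  toFun y := ⟨e y, e.lt_iff_lt.mpr y.2⟩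
  invFun y := ⟨e.symm y, e.symm_apply_lt.mpr y.2⟩
  left_inv y := by simp
  right_inv y := by simp
  map_rel_iff' := e.le_iff_le

variable [LinearOrder α] [LinearOrder β] {x : α} {y : β}

def piecewiseIioIci (e₁ : Iio x ≃o Iio y) (e₂ : Ici x ≃o Ici y) : α ≃o β :=
  (sumLexIioIci x).symm.trans ((sumLexCongr e₁ e₂).trans (sumLexIioIci y))

theorem piecewiseIioIci_apply_of_le (e₁ : Iio x ≃o Iio y) (e₂ : Ici x ≃o Ici y) {z : α}
    (hz : x ≤ z) : piecewiseIioIci e₁ e₂ z = e₂ ⟨z, hz⟩ := by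
  simp [piecewiseIioIci, sumLexIioIci_symm_apply_of_ge hz]

end OrderIso

section Canonical

variable {M : Type*} [AddCommMonoid M] [LinearOrder M] [IsOrderedCancelAddMonoid M]
  [CanonicallyOrderedAdd M]

noncomputable def OrderIso.addLeftIci (a : M) : M ≃o Ici a :=
  StrictMono.orderIsoOfSurjective (fun x ↦ ⟨a + x, le_self_add⟩)
    (fun _ _ h ↦ Subtype.mk_lt_mk.mpr ((add_lt_add_iff_left a).mpr h))
    (fun y ↦ (exists_add_of_le y.2).imp fun _ h ↦ Subtype.ext h.symm)

@[simp]
theorem OrderIso.addLeftIci_apply (a x : M) : (addLeftIci a x : M) = a + x :=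
  congrArg Subtype.val (congrFun (StrictMono.coe_orderIsoOfSurjective _ _ _) x)

@[simp]
theorem OrderIso.addLeftIci_symm_apply_add (a x : M) :
    (addLeftIci a).symm ⟨a + x, le_self_add⟩ = x :=
  (addLeftIci a).symm_apply_eq.mpr (Subtype.ext (addLeftIci_apply a x).symm)

end Canonical

/-- `E⁵` is preserved under addition. -/
theorem E5_add {M : Type*} [CommSemiring M] [LinearOrder M] [IsStrictOrderedRing M]
    (h0 : ∀ x : M, 0 ≤ x)
    (hsub : ∀ a b : M, a ≤ b → ∃ c, b = a + c)
    (a₁ a₂ b₁ b₂ : M)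
    (f₁ : M ≃o M) (hf₁ : f₁ a₁ = b₁) (f₂ : M ≃o M) (hf₂ : f₂ a₂ = b₂) :
    ∃ f : M ≃o M, f (a₁ + a₂) = b₁ + b₂ := by
  subst hf₁ hf₂
  have : CanonicallyOrderedAdd M :=
    { exists_add_of_le := hsub _ _
      le_add_self := fun _ b ↦ le_add_of_nonneg_left (h0 b)
      le_self_add := fun _ b ↦ le_add_of_nonneg_right (h0 b) }
  let shifted : Ici a₁ ≃o Ici (f₁ a₁) :=
    ((OrderIso.addLeftIci a₁).symm.trans f₂).trans (OrderIso.addLeftIci (f₁ a₁))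
  refine ⟨OrderIso.piecewiseIioIci (f₁.Iio a₁) shifted, ?_⟩
  rw [OrderIso.piecewiseIioIci_apply_of_le _ _ le_self_add]
  simp [shifted]
end

section
/- Assume M₁ is 4-order-rigid and h : M₁ ≃o M₂ is an order isomorphism. Then for all nonstandard a, b ∈ M₁: if h a E⁴ h b in M₂, then a E⁴ b in M₁. -/
/-!
An order isomorphism `h` maps `[0, b)` onto `[0, h b)`. Division with remainder by `c` identifies
`[0, c * c')` with the lexicographic product `[0, c') ×ₗ [0, c)`, so by induction `[0, bⁿ)` and
`[0, (h b)ⁿ)` are order isomorphic as well. Hence if `h a < (h b)ⁿ`, the element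
`c = h⁻¹ ((h b)ⁿ) > a` has `[0, c) ≅ [0, bⁿ)`, and 4-order-rigidity of `M₁` gives
`a < c < (bⁿ)ᵐ`.
-/

def OrderIso.subtypeLt {α β : Type*} [Preorder α] [Preorder β] (e : α ≃o β) (b : α) :
    {x // x < b} ≃o {y // y < e b} where
  toEquiv := e.toEquiv.subtypeEquiv fun _ => e.lt_iff_lt.symm
  map_rel_iff' := e.le_iff_le

theorem one_le_of_ne_zero_of_discrete {M : Type*} [AddZeroClass M] [One M] [LinearOrder M]
    (h0 : ∀ x : M, 0 ≤ x) (hd : ∀ a x : M, ¬(a < x ∧ x < a + 1)) {x : M} (hx : x ≠ 0) : 1 ≤ x :=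
  not_lt.1 fun h1 => hd 0 x ⟨(h0 x).lt_of_ne' hx, by rwa [zero_add]⟩

section Discrete

variable {M : Type*} [CommSemiring M] [LinearOrder M] [IsStrictOrderedRing M]

theorem Nonstd.mono {a b : M} (ha : Nonstd a) (hab : a ≤ b) : Nonstd b :=
  fun n => (ha n).trans_le hab

theorem Nonstd.one_le {a : M} (ha : Nonstd a) : 1 ≤ a := by
  simpa using (ha 1).le

@[reducible] noncomputable def uniqueLtOneOfDiscrete (h0 : ∀ x : M, 0 ≤ x)
    (hd : ∀ a x : M, ¬(a < x ∧ x < a + 1)) : Unique {x : M // x < 1} where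
  default := ⟨0, zero_lt_one⟩
  uniq x := Subtype.ext <| by_contra fun hx => x.2.not_ge (one_le_of_ne_zero_of_discrete h0 hd hx)

theorem mul_add_lt_mul_add_of_lt_of_discrete (h0 : ∀ x : M, 0 ≤ x)
    (hd : ∀ a x : M, ¬(a < x ∧ x < a + 1)) {c q q' r r' : M} (hr : r < c) (hq : q < q') :
    c * q + r < c * q' + r' :=
  have hq1 : q + 1 ≤ q' := not_lt.1 fun h => hd q q' ⟨hq, h⟩
  calc c * q + r < c * q + c := by gcongr
    _ = c * (q + 1) := by ring
    _ ≤ c * q' := by gcongr; exact h0 c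
    _ ≤ c * q' + r' := le_add_of_nonneg_right (h0 r')

/-- Division with remainder by `c` identifies `[0, c * c')` with `[0, c') ×ₗ [0, c)`. -/
noncomputable def lexOrderIsoLtMul (h0 : ∀ x : M, 0 ≤ x)
    (hd : ∀ a x : M, ¬(a < x ∧ x < a + 1))
    (hdiv : ∀ a b : M, b ≠ 0 → ∃ q r : M, a = b * q + r ∧ r < b) {c : M} (hc : c ≠ 0) (c' : M) :
    {q // q < c'} ×ₗ {r // r < c} ≃o {x // x < c * c'} :=
  StrictMono.orderIsoOfSurjective
    (fun p => ⟨c * (ofLex p).1 + (ofLex p).2, by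
      simpa using mul_add_lt_mul_add_of_lt_of_discrete h0 hd (r' := 0) (ofLex p).2.2 (ofLex p).1.2⟩)
    (by
      rintro ⟨⟨q, hq⟩, ⟨r, hr⟩⟩ ⟨⟨q', hq'⟩, ⟨r', hr'⟩⟩ hlt
      rcases Prod.Lex.lt_iff.1 hlt with hlt | ⟨heq, hlt⟩
      · exact mul_add_lt_mul_add_of_lt_of_discrete h0 hd hr hlt
      · cases congrArg Subtype.val heq
        exact (add_lt_add_iff_left _).2 hlt)
    (by
      rintro ⟨x, hx⟩
      obtain ⟨q, r, rfl, hr⟩ := hdiv x c hc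
      have hq : q < c' := not_le.1 fun hq => hx.not_ge <|
        calc c * c' ≤ c * q := by gcongr; exact h0 c
          _ ≤ c * q + r := le_add_of_nonneg_right (h0 r)
      exact ⟨toLex (⟨q, hq⟩, ⟨r, hr⟩), rfl⟩)

end Discrete

theorem OrderIso.map_ne_zero_of_forall_nonneg {α β : Type*} [Zero α] [PartialOrder α] [Zero β]
    [Preorder β] (h0α : ∀ x : α, 0 ≤ x) (h0β : ∀ y : β, 0 ≤ y) (h : α ≃o β) {x : α}
    (hx : x ≠ 0) : h x ≠ 0 :=
  ((h0β (h 0)).trans_lt (h.lt_iff_lt.2 ((h0α x).lt_of_ne' hx))).ne'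

section Transfer

variable {M₁ M₂ : Type*} [CommSemiring M₁] [LinearOrder M₁] [IsStrictOrderedRing M₁]
  [CommSemiring M₂] [LinearOrder M₂] [IsStrictOrderedRing M₂]

theorem nonempty_orderIso_lt_pow (h0₁ : ∀ x : M₁, 0 ≤ x) (h0₂ : ∀ x : M₂, 0 ≤ x)
    (hd₁ : ∀ a x : M₁, ¬(a < x ∧ x < a + 1)) (hd₂ : ∀ a x : M₂, ¬(a < x ∧ x < a + 1))
    (hdiv₁ : ∀ a b : M₁, b ≠ 0 → ∃ q r : M₁, a = b * q + r ∧ r < b)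
    (hdiv₂ : ∀ a b : M₂, b ≠ 0 → ∃ q r : M₂, a = b * q + r ∧ r < b)
    (h : M₁ ≃o M₂) {b : M₁} (hb : b ≠ 0) (n : ℕ) :
    Nonempty ({x // x < b ^ n} ≃o {y // y < h b ^ n}) := by
  induction n with
  | zero =>
    let _ := uniqueLtOneOfDiscrete h0₁ hd₁
    let _ := uniqueLtOneOfDiscrete h0₂ hd₂
    rw [pow_zero, pow_zero]
    exact ⟨OrderIso.ofUnique _ _⟩
  | succ n ih =>
    obtain ⟨e⟩ := ih
    have hhb : h b ≠ 0 := h.map_ne_zero_of_forall_nonneg h0₁ h0₂ hb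
    rw [pow_succ', pow_succ']
    exact ⟨(lexOrderIsoLtMul h0₁ hd₁ hdiv₁ hb _).symm.trans <|
      (Prod.Lex.prodLexCongr e (h.subtypeLt b)).trans (lexOrderIsoLtMul h0₂ hd₂ hdiv₂ hhb _)⟩

theorem OrderRigid4.exists_lt_pow_of_map_lt_pow (hrig : OrderRigid4 M₁)
    (h0₁ : ∀ x : M₁, 0 ≤ x) (h0₂ : ∀ x : M₂, 0 ≤ x)
    (hd₁ : ∀ a x : M₁, ¬(a < x ∧ x < a + 1)) (hd₂ : ∀ a x : M₂, ¬(a < x ∧ x < a + 1))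
    (hdiv₁ : ∀ a b : M₁, b ≠ 0 → ∃ q r : M₁, a = b * q + r ∧ r < b)
    (hdiv₂ : ∀ a b : M₂, b ≠ 0 → ∃ q r : M₂, a = b * q + r ∧ r < b)
    (h : M₁ ≃o M₂) {u v : M₁} (hu : Nonstd u) (hv : Nonstd v) {n : ℕ} (huv : h u < h v ^ n) :
    ∃ N : ℕ, u < v ^ N := by
  have hv0 : v ≠ 0 := (zero_lt_one.trans_le hv.one_le).ne'
  have hhv : 1 ≤ h v :=
    one_le_of_ne_zero_of_discrete h0₂ hd₂ (h.map_ne_zero_of_forall_nonneg h0₁ h0₂ hv0)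
  -- raising the exponent to `n + 1` makes `v ^ (n + 1)` nonstandard
  set w := h v ^ (n + 1)
  have huw : u < h.symm w := by
    simpa using h.symm.lt_iff_lt.2 (huv.trans_le (pow_le_pow_right₀ hhv n.le_succ))
  obtain ⟨e⟩ := nonempty_orderIso_lt_pow h0₁ h0₂ hd₁ hd₂ hdiv₁ hdiv₂ h hv0 (n + 1)
  obtain ⟨m, hm, -⟩ := hrig _ _ (hu.mono huw.le) (hv.mono (le_self_pow₀ hv.one_le n.succ_ne_zero))
    ⟨(h.symm.subtypeLt w).symm.trans e.symm⟩
  exact ⟨(n + 1) * m, huw.trans (by rwa [pow_mul])⟩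

end Transfer

theorem fourOR_orderIso_reflects_E4_general {M₁ M₂ : Type*}
    [CommSemiring M₁] [LinearOrder M₁] [IsStrictOrderedRing M₁] [CommSemiring M₂] [LinearOrder M₂] [IsStrictOrderedRing M₂]
    (h0₁ : ∀ x : M₁, 0 ≤ x) (h0₂ : ∀ x : M₂, 0 ≤ x)
    (hd₁ : ∀ a x : M₁, ¬(a < x ∧ x < a + 1)) (hd₂ : ∀ a x : M₂, ¬(a < x ∧ x < a + 1))
    (hdiv₁ : ∀ a b : M₁, b ≠ 0 → ∃ q r : M₁, a = b * q + r ∧ r < b)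
    (hdiv₂ : ∀ a b : M₂, b ≠ 0 → ∃ q r : M₂, a = b * q + r ∧ r < b)
    (hrig : OrderRigid4 M₁)
    (h : M₁ ≃o M₂) (a b : M₁) (ha : Nonstd a) (hb : Nonstd b)
    (hE : E4 (h a) (h b)) :
    E4 a b := by
  obtain ⟨n, hab, hba⟩ := hE
  obtain ⟨N₁, hN₁⟩ := hrig.exists_lt_pow_of_map_lt_pow h0₁ h0₂ hd₁ hd₂ hdiv₁ hdiv₂ h ha hb hab
  obtain ⟨N₂, hN₂⟩ := hrig.exists_lt_pow_of_map_lt_pow h0₁ h0₂ hd₁ hd₂ hdiv₁ hdiv₂ h hb ha hba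
  exact ⟨max N₁ N₂, hN₁.trans_le (pow_le_pow_right₀ hb.one_le (le_max_left _ _)),
    hN₂.trans_le (pow_le_pow_right₀ ha.one_le (le_max_right _ _))⟩

/-- if `M₁` is 4-order-rigid and `h : M₁ ≃o M₂` is an order isomorphism,
then `h a E⁴ h b` (in `M₂`) implies `a E⁴ b` (in `M₁`). -/
theorem fourOR_orderIso_reflects_E4 {M₁ M₂ : Type*}
    [CommSemiring M₁] [LinearOrder M₁] [IsStrictOrderedRing M₁] [CommSemiring M₂] [LinearOrder M₂] [IsStrictOrderedRing M₂]
    (h0₁ : ∀ x : M₁, 0 ≤ x) (h0₂ : ∀ x : M₂, 0 ≤ x)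
    (hd₁ : ∀ a x : M₁, ¬(a < x ∧ x < a + 1)) (hd₂ : ∀ a x : M₂, ¬(a < x ∧ x < a + 1))
    (hsub₁ : ∀ a b : M₁, a ≤ b → ∃ c, b = a + c)
    (hsub₂ : ∀ a b : M₂, a ≤ b → ∃ c, b = a + c)
    (hdiv₁ : ∀ a b : M₁, b ≠ 0 → ∃ q r : M₁, a = b * q + r ∧ r < b)
    (hdiv₂ : ∀ a b : M₂, b ≠ 0 → ∃ q r : M₂, a = b * q + r ∧ r < b)
    (hrig : OrderRigid4 M₁)
    (h : M₁ ≃o M₂) (a b : M₁) (ha : Nonstd a) (hb : Nonstd b)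
    (hE : E4 (h a) (h b)) :
    E4 a b :=
  fourOR_orderIso_reflects_E4_general h0₁ h0₂ hd₁ hd₂ hdiv₁ hdiv₂ hrig h a b ha hb hE
end
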